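/- arXiv:1801.06947 — 2 statements merged into one kernel-verified Lean document; each statement's English description precedes it below -/
import Mathlib

section
/- For every monomial y of ℂ[y_S] there is a unique multichain monomial y′ with φ(y′) = φ(y). Moreover, extending μ to an arbitrary monomial y = y_{S_1}⋯y_{S_m} as the decreasing rearrangement of (|S_1|,…,|S_m|), if y is not itself a multichain monomial then μ(y′) ▷ μ(y), i.e. μ(y′) is strictly greater than μ(y) in dominance order. -/
open scoped Classical
open MvPolynomial Finset

noncomputable section

/-- Nonempty subsets of `[n]`, the index set of the variables `y_S`. -/
abbrev NES (n : ℕ) := {S : Finset (Fin n) // S.Nonempty}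

/-- The polynomial ring `ℂ[y_S]`. -/
abbrev YRing (n : ℕ) := MvPolynomial (NES n) ℂ

/-- The polynomial ring `ℂ[x_1, …, x_n]`. -/
abbrev XRing (n : ℕ) := MvPolynomial (Fin n) ℂ

/-- The variable `y_F`, with junk value `1` when `F = ∅`. -/
def Yv {n : ℕ} (F : Finset (Fin n)) : YRing n :=
  if h : F.Nonempty then X ⟨F, h⟩ else 1

/-- `θ_i = Σ_{|S| = i} y_S^r`. -/
def theta (n r i : ℕ) : YRing n :=
  ∑ S ∈ univ.filter (fun S : NES n => S.1.card = i), X S ^ r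

/-- Stanley–Reisner generators `y_S y_T` for incomparable `S, T`. -/
def srSet (n : ℕ) : Set (YRing n) :=
  {p | ∃ S T : NES n, ¬ S.1 ⊆ T.1 ∧ ¬ T.1 ⊆ S.1 ∧ p = X S * X T}

/-- The generators `θ_{n-k+1}, …, θ_n`. -/
def thetaSet (n k r : ℕ) : Set (YRing n) :=
  {p | ∃ i : ℕ, n - k + 1 ≤ i ∧ i ≤ n ∧ p = theta n r i}

/-- Products `y_{S_1} ⋯ y_{S_m}` over multichains `S_1 ⊆ ⋯ ⊆ S_m` of length `m`. -/
def chainSet (n m : ℕ) : Set (YRing n) :=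
  {p | ∃ S : Fin m → NES n, (∀ i j : Fin m, i ≤ j → (S i).1 ⊆ (S j).1) ∧ p = ∏ i, X (S i)}

def SRideal (n : ℕ) : Ideal (YRing n) := Ideal.span (srSet n)

def STideal (n k r : ℕ) : Ideal (YRing n) := Ideal.span (srSet n ∪ thetaSet n k r)

/-- The ideal `𝓙_{n,k}`. -/
def Jideal (n k r : ℕ) : Ideal (YRing n) :=
  Ideal.span (srSet n ∪ thetaSet n k r ∪ chainSet n (k * r))

/-- The ideal `𝓘_{n,k}`. -/
def Iideal (n k r : ℕ) : Ideal (YRing n) :=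
  Ideal.span (srSet n ∪ thetaSet n k r ∪ chainSet n (k * r + 1))

/-- An `r`-colored word of length `m` on distinct letters from `[n]`. -/
structure CWord (n r m : ℕ) where
  letter : Fin m → Fin n
  inj : Function.Injective letter
  color : Fin m → Fin r

/-- `r`-colored permutations of `[n]`, i.e. the group `G(r,1,n)` as a set. -/
abbrev CPerm (n r : ℕ) := CWord n r n

/-- The order on colored letters: `(a,c) < (b,d)` iff `c > d`, or `c = d` and `a < b`. -/
def colLt {n r : ℕ} (a b : Fin n × Fin r) : Prop :=
  b.2 < a.2 ∨ (a.2 = b.2 ∧ a.1 < b.1)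

/-- The descent set of a colored word (0-indexed positions). -/
def DesSet {n r m : ℕ} (w : CWord n r m) : Finset (Fin m) :=
  univ.filter fun i => ∃ j : Fin m, (j : ℕ) = (i : ℕ) + 1 ∧
    colLt (w.letter j, w.color j) (w.letter i, w.color i)

def desNum {n r m : ℕ} (w : CWord n r m) : ℕ := (DesSet w).card

/-- `maj(w) = Σ colors + r · Σ_{i ∈ Des(w)} i` (1-based positions). -/
def majW {n r m : ℕ} (w : CWord n r m) : ℕ :=
  (∑ i, (w.color i : ℕ)) + r * ∑ i ∈ DesSet w, ((i : ℕ) + 1)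

/-- The set of the first `t` letters of `w`. -/
def pref {n r m : ℕ} (w : CWord n r m) (t : ℕ) : Finset (Fin n) :=
  univ.filter fun a => ∃ l : Fin m, (l : ℕ) < t ∧ w.letter l = a

/-- The exponent `m_i = c_i - c_{i+1} + r·[i ∈ Des(g)]` (and `m_last = c_last`). -/
def mExp {n r m : ℕ} (w : CWord n r m) (i : Fin m) : ℕ :=
  (((w.color i : ℤ) - (if h : (i : ℕ) + 1 < m then (w.color ⟨(i : ℕ) + 1, h⟩ : ℤ) else 0))
    + (if i ∈ DesSet w then (r : ℤ) else 0)).toNat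

/-- The descent monomial `b̃_w`. -/
def btw {n r m : ℕ} (w : CWord n r m) : YRing n :=
  ∏ i : Fin m, Yv (pref w ((i : ℕ) + 1)) ^ mExp w i

/-- `b̃_{(g,d)} = b̃_g · Π_i y_{T_i}^{r d_i}`. -/
def btd {n r : ℕ} (g : CPerm n r) (d : Fin n → ℕ) : YRing n :=
  btw g * ∏ i : Fin n, Yv (pref g ((i : ℕ) + 1)) ^ (r * d i)

/-- `b̃_{(w,λ)} = b̃_w · Π_j y_{S_{λ_j}}^r` for a list `λ` of parts. -/
def btl {n r m : ℕ} (w : CWord n r m) (lam : List ℕ) : YRing n :=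
  btw w * (lam.map fun p => Yv (pref w p) ^ r).prod

/-- `r`-colored ordered set partitions of `[n]` with `k` blocks, encoded as pairs `(g, λ)`. -/
structure OPIdx (n k r : ℕ) where
  g : CPerm n r
  lam : List ℕ
  sorted : lam.Pairwise (· ≥ ·)
  pos : ∀ p ∈ lam, 1 ≤ p
  parts_le : ∀ p ∈ lam, p ≤ n - k
  len : lam.length + desNum g + 1 ≤ k

def btOP {n k r : ℕ} (o : OPIdx n k r) : YRing n := btl o.g o.lam

/-- `k`-dimensional `G_n`-faces, encoded as triples `(Z, w, λ)`. -/
structure FIdx (n k r : ℕ) where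
  Z : Finset (Fin n)
  cardZ : Z.card ≤ n - k
  w : CWord n r (n - Z.card)
  mem : ∀ j, w.letter j ∉ Z
  lam : List ℕ
  sorted : lam.Pairwise (· ≥ ·)
  pos : ∀ p ∈ lam, 1 ≤ p
  parts_le : ∀ p ∈ lam, p ≤ n - Z.card - k
  len : lam.length + desNum w + 1 ≤ k

/-- The monomial `b̃_{(Z,g,λ)}`. -/
def btF {n k r : ℕ} (f : FIdx n k r) : YRing n :=
  Yv f.Z ^ (k * r - (btl f.w f.lam).totalDegree) *
    ((∏ i : Fin (n - f.Z.card), Yv (pref f.w ((i : ℕ) + 1) ∪ f.Z) ^ mExp f.w i) *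
      (f.lam.map fun p => Yv (pref f.w p ∪ f.Z) ^ r).prod)

/-- The transfer map `φ : ℂ[y_S] → ℂ[x_n]`, `y_S ↦ Π_{i ∈ S} x_i`. -/
def phi (n : ℕ) : YRing n →ₐ[ℂ] XRing n := aeval fun S : NES n => ∏ i ∈ S.1, X i

/-- An element of `G(r,1,n)`: a permutation together with `r`-th roots of unity. -/
structure GElem (n r : ℕ) where
  perm : Equiv.Perm (Fin n)
  scalar : Fin n → ℂ
  root : ∀ i, scalar i ^ r = 1

/-- The action of `G(r,1,n)` on `ℂ[x_n]` by linear substitution. -/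
def actX {n r : ℕ} (g : GElem n r) : XRing n →ₐ[ℂ] XRing n :=
  aeval fun i => g.scalar i • X (g.perm i)

/-- The action of `G(r,1,n)` on `ℂ[y_S]`, `g · y_S = α · y_{g(S)}`. -/
def actY {n r : ℕ} (g : GElem n r) : YRing n →ₐ[ℂ] YRing n :=
  aeval fun S : NES n =>
    (∏ i ∈ S.1, g.scalar i) • X (⟨S.1.image g.perm, S.2.image _⟩ : NES n)

/-- An exponent vector is a multichain if its support is a chain of subsets. -/
def IsChainE {n : ℕ} (e : NES n →₀ ℕ) : Prop :=
  ∀ S ∈ e.support, ∀ T ∈ e.support, S.1 ⊆ T.1 ∨ T.1 ⊆ S.1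

/-- `μ(y)`: the multiset of sizes (with multiplicity) of a monomial with exponents `e`. -/
def muE {n : ℕ} (e : NES n →₀ ℕ) : Multiset ℕ :=
  e.sum fun S m => Multiset.replicate m S.1.card

/-- Sum of the `j` largest entries of a multiset of naturals. -/
def psum (a : Multiset ℕ) (j : ℕ) : ℕ := (((a.sort (· ≤ ·)).reverse).take j).sum

/-- Dominance order on partitions (encoded as multisets) of the same number. -/
def domLE (a b : Multiset ℕ) : Prop := a.sum = b.sum ∧ ∀ j, psum a j ≤ psum b j

/-- Strict dominance order. -/
def domLT (a b : Multiset ℕ) : Prop := domLE a b ∧ a ≠ b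

/-- Order on the variables: `y_S > y_T` iff `|S| > |T|`, or `|S| = |T|` and
`min (S \ T) < min (T \ S)`. -/
def varGt {n : ℕ} (S T : NES n) : Prop :=
  T.1.card < S.1.card ∨
    (S.1.card = T.1.card ∧ ∃ a ∈ S.1 \ T.1, ∀ b ∈ T.1 \ S.1, a < b)

/-- The graded lexicographic order on monomials (exponent vectors) of `ℂ[y_S]`. -/
def monLt {n : ℕ} (e f : NES n →₀ ℕ) : Prop :=
  (e.sum fun _ m => m) < (f.sum fun _ m => m) ∨
    ((e.sum fun _ m => m) = (f.sum fun _ m => m) ∧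
      ∃ S, e S < f S ∧ ∀ T, varGt T S → e T = f T)

/-- `e` is the leading monomial of `p`. -/
def IsLM {n : ℕ} (p : YRing n) (e : NES n →₀ ℕ) : Prop :=
  e ∈ p.support ∧ ∀ f ∈ p.support, f ≠ e → monLt f e

/-- The ideal of leading monomials of nonzero elements of `I`. -/
def LMideal {n : ℕ} (I : Ideal (YRing n)) : Ideal (YRing n) :=
  Ideal.span {q | ∃ p e, p ∈ I ∧ p ≠ 0 ∧ IsLM p e ∧ q = (monomial e 1 : YRing n)}

/-- `e_d(x_1^r, …, x_n^r)`. -/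
def esymmR (n r d : ℕ) : XRing n :=
  ∑ t ∈ (univ : Finset (Fin n)).powersetCard d, ∏ i ∈ t, X i ^ r

/-- The ideal `J_{n,k}` of Chan–Rhoades. -/
def Jx (n k r : ℕ) : Ideal (XRing n) :=
  Ideal.span ({p | ∃ i : Fin n, p = X i ^ (k * r)} ∪
    {p | ∃ d : ℕ, n - k + 1 ≤ d ∧ d ≤ n ∧ p = esymmR n r d})

/-- The ideal `I_{n,k}` of Chan–Rhoades. -/
def Ix (n k r : ℕ) : Ideal (XRing n) :=
  Ideal.span ({p | ∃ i : Fin n, p = X i ^ (k * r + 1)} ∪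
    {p | ∃ d : ℕ, n - k + 1 ≤ d ∧ d ≤ n ∧ p = esymmR n r d})

/-! The image `φ(y^e)` is the monomial `x^d` with `d_i = Σ_{S ∋ i} e_S`, so everything depends on
`e` only through `d`. In a multichain with degree vector `d` the largest member is the union of all
members, i.e. `{d ≥ 1}`; removing it lowers `d` by one, so the multichain is forced to be
`{d ≥ 1} ⊇ {d ≥ 2} ⊇ ⋯`, and this multichain exists.

Peeling off a largest set also drives the dominance statement: the `j` largest sets of any monomial
contain each `i` at most `min j d_i` times, so the `j` largest parts of `μ(y)` sum to at most
`Σ_i min j d_i`, with equality for a multichain. Conversely, equality at `j = 1` says that a largest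
set is `{d ≥ 1}`, hence contains all the others, and equality for all `j` propagates to the rest. -/

namespace Finsupp

variable {ι α : Type*} [LinearOrder α]

@[elab_as_elim]
theorem induction_on_max_single_add {p : (ι →₀ ℕ) → Prop} (f : ι → α) (e : ι →₀ ℕ)
    (zero : p 0)
    (single_add : ∀ a e, (∀ b ∈ e.support, f b ≤ f a) → p e → p (single a 1 + e)) :
    p e := by
  induction hd : e.degree generalizing e with
  | zero => rwa [(degree_eq_zero_iff e).1 hd]
  | succ k ih =>
    obtain ⟨a, ha, hmax⟩ := e.support.exists_max_image f
      (support_nonempty_iff.2 fun h => by simp [h] at hd)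
    have hle : single a 1 ≤ e := single_le_iff.2 (Nat.one_le_iff_ne_zero.2 (mem_support_iff.1 ha))
    have hdeg := congrArg degree (add_tsub_cancel_of_le hle)
    rw [map_add, degree_single, hd] at hdeg
    rw [← add_tsub_cancel_of_le hle]
    exact single_add a _ (fun b hb => hmax b (support_tsub hb)) (ih _ (by omega))

end Finsupp

theorem Multiset.reverse_sort_le {α : Type*} [LinearOrder α] (s : Multiset α) :
    (s.sort (· ≤ ·)).reverse = s.sort (· ≥ ·) :=
  List.Perm.eq_of_pairwise' (r := (· ≥ ·)) (List.pairwise_reverse.2 (Multiset.pairwise_sort _ _))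
    (Multiset.pairwise_sort _ _)
    ((List.reverse_perm _).trans
      (by rw [← Multiset.coe_eq_coe, Multiset.sort_eq, Multiset.sort_eq]))

theorem psum_zero_left (j : ℕ) : _root_.psum 0 j = 0 := by simp [_root_.psum]

theorem psum_zero_right (s : Multiset ℕ) : _root_.psum s 0 = 0 := by simp [_root_.psum]

theorem psum_cons_succ {a : ℕ} {s : Multiset ℕ} (h : ∀ x ∈ s, x ≤ a) (j : ℕ) :
    _root_.psum (a ::ₘ s) (j + 1) = a + _root_.psum s j := by
  rw [_root_.psum, _root_.psum, Multiset.reverse_sort_le, Multiset.reverse_sort_le,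
    Multiset.sort_cons a s (· ≥ ·) h, List.take_succ_cons, List.sum_cons]

namespace Multichain

open Finsupp (single)

variable {n : ℕ}

def xDeg (e : NES n →₀ ℕ) (i : Fin n) : ℕ := ∑ S ∈ univ.filter (fun S : NES n => i ∈ S.1), e S

theorem xDeg_zero : xDeg (0 : NES n →₀ ℕ) = 0 := by
  funext i
  simp [xDeg]

theorem xDeg_single_add (U : NES n) (e : NES n →₀ ℕ) (i : Fin n) :
    xDeg (single U 1 + e) i = (if i ∈ U.1 then 1 else 0) + xDeg e i := by
  simp [xDeg, Finset.sum_add_distrib, Finsupp.single_apply]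

theorem le_xDeg (e : NES n →₀ ℕ) {S : NES n} {i : Fin n} (h : i ∈ S.1) : e S ≤ xDeg e i :=
  Finset.single_le_sum (fun _ _ => Nat.zero_le _) (by simpa using h)

theorem xDeg_ne_zero_iff {e : NES n →₀ ℕ} {i : Fin n} :
    xDeg e i ≠ 0 ↔ ∃ S ∈ e.support, i ∈ S.1 := by
  simp only [xDeg, ne_eq, Finset.sum_eq_zero_iff, not_forall, Finset.mem_filter, Finset.mem_univ,
    true_and, Finsupp.mem_support_iff, exists_prop]
  exact exists_congr fun _ => and_comm

theorem xDeg_eq_zero_of_forall_subset {e : NES n →₀ ℕ} {s : Finset (Fin n)}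
    (h : ∀ S ∈ e.support, S.1 ⊆ s) {i : Fin n} (hi : i ∉ s) : xDeg e i = 0 := by
  by_contra hne
  obtain ⟨S, hS, hiS⟩ := xDeg_ne_zero_iff.1 hne
  exact hi (h S hS hiS)

theorem phi_monomial (e : NES n →₀ ℕ) :
    phi n (monomial e 1) = monomial (Finsupp.equivFunOnFinite.symm (xDeg e)) 1 := by
  rw [phi, aeval_monomial, map_one, one_mul, monomial_eq, map_one, one_mul,
    Finsupp.prod_fintype _ _ fun _ => pow_zero _, Finsupp.prod_fintype _ _ fun _ => pow_zero _]
  simp only [← Finset.prod_pow, Finsupp.coe_equivFunOnFinite_symm, xDeg,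
    ← Finset.prod_pow_eq_pow_sum]
  exact Finset.prod_comm' (by simp)

theorem phi_monomial_eq_iff {e f : NES n →₀ ℕ} :
    phi n (monomial e 1) = phi n (monomial f 1) ↔ xDeg e = xDeg f := by
  rw [phi_monomial, phi_monomial, (monomial_left_injective one_ne_zero).eq_iff,
    Finsupp.equivFunOnFinite.symm.injective.eq_iff]

theorem isChainE_single_add_iff {U : NES n} {e : NES n →₀ ℕ}
    (hU : ∀ S ∈ e.support, S.1.card ≤ U.1.card) :
    IsChainE (single U 1 + e) ↔ (∀ S ∈ e.support, S.1 ⊆ U.1) ∧ IsChainE e := by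
  have hsupp : (single U 1 + e).support = insert U e.support := by
    rw [Finsupp.support_add_eq_union, Finsupp.support_single U one_ne_zero, Finset.insert_eq]
  simp only [IsChainE, hsupp, Finset.mem_insert, forall_eq_or_imp]
  refine ⟨fun ⟨⟨_, hUS⟩, hrest⟩ => ⟨fun S hS => ?_, fun S hS T hT => (hrest S hS).2 T hT⟩,
    fun ⟨hsub, hch⟩ => ⟨⟨Or.inl subset_rfl, fun S hS => Or.inr (hsub S hS)⟩,
      fun S hS => ⟨Or.inl (hsub S hS), hch S hS⟩⟩⟩
  rcases hUS S hS with h | h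
  · rw [Finset.eq_of_subset_of_card_le h (hU S hS)]
  · exact h

def nonzeroSet (d : Fin n → ℕ) : Finset (Fin n) := univ.filter fun i => d i ≠ 0

@[simp]
theorem mem_nonzeroSet {d : Fin n → ℕ} {i : Fin n} : i ∈ nonzeroSet d ↔ d i ≠ 0 := by
  simp [nonzeroSet]

theorem subset_nonzeroSet_xDeg {e : NES n →₀ ℕ} {S : NES n} (hS : S ∈ e.support) :
    S.1 ⊆ nonzeroSet (xDeg e) :=
  fun _ hi => mem_nonzeroSet.2 (xDeg_ne_zero_iff.2 ⟨S, hS, hi⟩)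

/-- The multichain `{d ≥ 1} ⊇ {d ≥ 2} ⊇ ⋯`. -/
def levelChain (d : Fin n → ℕ) : NES n →₀ ℕ :=
  if h : (nonzeroSet d).Nonempty then single ⟨_, h⟩ 1 + levelChain (d - 1) else 0
termination_by ∑ i, d i
decreasing_by
  obtain ⟨i, hi⟩ := h
  refine Finset.sum_lt_sum (fun j _ => Nat.sub_le _ _) ⟨i, Finset.mem_univ i, ?_⟩
  simp only [mem_nonzeroSet] at hi
  simp only [Pi.sub_apply, Pi.one_apply]
  omega

theorem levelChain_zero : levelChain (0 : Fin n → ℕ) = 0 := by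
  rw [levelChain, dif_neg (by simp [nonzeroSet])]

theorem levelChain_eq_single_add {d : Fin n → ℕ} {U : NES n} (hU : nonzeroSet d = U.1) :
    levelChain d = single U 1 + levelChain (d - 1) := by
  obtain ⟨U, hne⟩ := U
  subst hU
  rw [levelChain, dif_pos hne]

theorem xDeg_levelChain (d : Fin n → ℕ) : xDeg (levelChain d) = d := by
  fun_induction levelChain d with
  | case1 d h ih =>
    funext i
    rw [xDeg_single_add, ih]
    by_cases hi : d i = 0 <;> simp [hi]
    omega
  | case2 d h =>
    funext i
    by_contra hi
    exact h ⟨i, mem_nonzeroSet.2 (by simpa [xDeg_zero, eq_comm] using hi)⟩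

theorem isChainE_levelChain (d : Fin n → ℕ) : IsChainE (levelChain d) := by
  fun_induction levelChain d with
  | case1 d h ih =>
    have hsub : ∀ S ∈ (levelChain (d - 1)).support, S.1 ⊆ nonzeroSet d := fun S hS i hi => by
      have := mem_nonzeroSet.1 (xDeg_levelChain (d - 1) ▸ subset_nonzeroSet_xDeg hS hi)
      simp only [Pi.sub_apply, Pi.one_apply] at this
      exact mem_nonzeroSet.2 (by omega)
    exact (isChainE_single_add_iff fun S hS => Finset.card_le_card (hsub S hS)).2 ⟨hsub, ih⟩
  | case2 => simp [IsChainE]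

theorem eq_levelChain_xDeg {e : NES n →₀ ℕ} (he : IsChainE e) : e = levelChain (xDeg e) := by
  induction e using Finsupp.induction_on_max_single_add (fun S : NES n => S.1.card) with
  | zero => rw [xDeg_zero, levelChain_zero]
  | single_add U e hU ih =>
    obtain ⟨hsub, hch⟩ := (isChainE_single_add_iff hU).1 he
    have hout : ∀ i ∉ U.1, xDeg e i = 0 := fun i => xDeg_eq_zero_of_forall_subset hsub
    have htop : nonzeroSet (xDeg (single U 1 + e)) = U.1 := by
      ext i
      by_cases hi : i ∈ U.1 <;> simp [xDeg_single_add, hi, hout]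
    have hlower : xDeg (single U 1 + e) - 1 = xDeg e := by
      funext i
      by_cases hi : i ∈ U.1 <;> simp [xDeg_single_add, hi, hout]
    rw [levelChain_eq_single_add htop, hlower, ← ih hch]

theorem muE_zero : muE (0 : NES n →₀ ℕ) = 0 := Finsupp.sum_zero_index

theorem muE_add (e f : NES n →₀ ℕ) : muE (e + f) = muE e + muE f :=
  Finsupp.sum_add_index' (fun _ => Multiset.replicate_zero _)
    fun _ _ _ => Multiset.replicate_add _ _ _

theorem muE_single_add (U : NES n) (e : NES n →₀ ℕ) :
    muE (single U 1 + e) = U.1.card ::ₘ muE e := by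
  rw [muE_add, ← Multiset.singleton_add]
  congr 1
  exact (Finsupp.sum_single_index (h := fun (S : NES n) m => Multiset.replicate m S.1.card)
    (Multiset.replicate_zero _)).trans (Multiset.replicate_one _)

theorem mem_muE {e : NES n →₀ ℕ} {x : ℕ} :
    x ∈ muE e ↔ ∃ S ∈ e.support, S.1.card = x := by
  simp only [muE, Finsupp.sum, Multiset.mem_sum, Multiset.mem_replicate]
  exact exists_congr fun S => and_congr_right fun hS =>
    ⟨fun h => h.2.symm, fun h => ⟨Finsupp.mem_support_iff.1 hS, h.symm⟩⟩

theorem sum_muE (e : NES n →₀ ℕ) : (muE e).sum = ∑ i, xDeg e i := by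
  induction e using Finsupp.induction_on_max_single_add (fun S : NES n => S.1.card) with
  | zero => simp [muE_zero, xDeg_zero]
  | single_add U e _ ih =>
    rw [muE_single_add, Multiset.sum_cons, ih, Finset.card_eq_sum_ite (Finset.subset_univ _),
      ← Finset.sum_add_distrib]
    exact Finset.sum_congr rfl fun i _ => (xDeg_single_add U e i).symm

theorem psum_muE_single_add {U : NES n} {e : NES n →₀ ℕ}
    (hU : ∀ S ∈ e.support, S.1.card ≤ U.1.card) (j : ℕ) :
    _root_.psum (muE (single U 1 + e)) (j + 1) = U.1.card + _root_.psum (muE e) j := by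
  refine muE_single_add U e ▸ psum_cons_succ (fun x hx => ?_) j
  obtain ⟨S, hS, rfl⟩ := mem_muE.1 hx
  exact hU S hS

theorem card_add_sum_min_le (U : NES n) (e : NES n →₀ ℕ) (j : ℕ) :
    U.1.card + ∑ i, min j (xDeg e i) ≤ ∑ i, min (j + 1) (xDeg (single U 1 + e) i) := by
  rw [Finset.card_eq_sum_ite (Finset.subset_univ _), ← Finset.sum_add_distrib]
  exact Finset.sum_le_sum fun i _ => by rw [xDeg_single_add]; split <;> omega

theorem sum_min_xDeg_single_add {U : NES n} {e : NES n →₀ ℕ}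
    (hsub : ∀ S ∈ e.support, S.1 ⊆ U.1) (j : ℕ) :
    ∑ i, min (j + 1) (xDeg (single U 1 + e) i) = U.1.card + ∑ i, min j (xDeg e i) := by
  rw [Finset.card_eq_sum_ite (Finset.subset_univ _), ← Finset.sum_add_distrib]
  refine Finset.sum_congr rfl fun i _ => ?_
  rw [xDeg_single_add]
  by_cases hi : i ∈ U.1
  · simp only [hi, if_true]
    omega
  · simp [hi, xDeg_eq_zero_of_forall_subset hsub hi]

theorem psum_muE_le (e : NES n →₀ ℕ) (j : ℕ) :
    _root_.psum (muE e) j ≤ ∑ i, min j (xDeg e i) := by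
  induction e using Finsupp.induction_on_max_single_add (fun S : NES n => S.1.card)
    generalizing j with
  | zero => simp [muE_zero, psum_zero_left]
  | single_add U e hU ih =>
    cases j with
    | zero => simp [psum_zero_right]
    | succ j =>
      rw [psum_muE_single_add hU]
      exact (Nat.add_le_add_left (ih j) _).trans (card_add_sum_min_le U e j)

theorem psum_muE_of_isChainE {e : NES n →₀ ℕ} (he : IsChainE e) (j : ℕ) :
    _root_.psum (muE e) j = ∑ i, min j (xDeg e i) := by
  induction e using Finsupp.induction_on_max_single_add (fun S : NES n => S.1.card)
    generalizing j with
  | zero => simp [muE_zero, psum_zero_left, xDeg_zero]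
  | single_add U e hU ih =>
    obtain ⟨hsub, hch⟩ := (isChainE_single_add_iff hU).1 he
    cases j with
    | zero => simp [psum_zero_right]
    | succ j => rw [psum_muE_single_add hU, ih hch, sum_min_xDeg_single_add hsub]

theorem isChainE_of_psum_muE_eq {e : NES n →₀ ℕ}
    (h : ∀ j, _root_.psum (muE e) j = ∑ i, min j (xDeg e i)) : IsChainE e := by
  induction e using Finsupp.induction_on_max_single_add (fun S : NES n => S.1.card) with
  | zero => simp [IsChainE]
  | single_add U e hU ih =>
    have hsub : ∀ S ∈ e.support, S.1 ⊆ U.1 := by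
      intro S hS i hiS
      by_contra hiU
      have h1 := h 1
      rw [psum_muE_single_add hU, psum_zero_right, add_zero,
        Finset.card_eq_sum_ite (Finset.subset_univ _)] at h1
      refine h1.not_lt (Finset.sum_lt_sum (fun k _ => ?_) ⟨i, Finset.mem_univ i, ?_⟩)
      · rw [xDeg_single_add]
        split <;> omega
      · have := le_xDeg e hiS
        have := Finsupp.mem_support_iff.1 hS
        rw [xDeg_single_add, if_neg hiU]
        omega
    refine (isChainE_single_add_iff hU).2 ⟨hsub, ih fun j => ?_⟩
    have hj := h (j + 1)
    rw [psum_muE_single_add hU, sum_min_xDeg_single_add hsub] at hj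
    omega

end Multichain

theorem exists_unique_multichain_phi_general (n : ℕ) (e : NES n →₀ ℕ) :
    (∃! y' : YRing n, (∃ e' : NES n →₀ ℕ, IsChainE e' ∧ y' = monomial e' 1) ∧
        phi n y' = phi n (monomial e 1)) ∧
    (¬ IsChainE e → ∀ e' : NES n →₀ ℕ, IsChainE e' →
        phi n (monomial e' 1) = phi n (monomial e 1) → domLT (muE e) (muE e')) := by
  open Multichain in
  refine ⟨⟨monomial (levelChain (xDeg e)) 1, ⟨⟨_, isChainE_levelChain _, rfl⟩,
    phi_monomial_eq_iff.2 (xDeg_levelChain _)⟩, ?_⟩, fun hne e' he' hphi => ?_⟩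
  · rintro _ ⟨⟨e', he', rfl⟩, hphi⟩
    rw [eq_levelChain_xDeg he', phi_monomial_eq_iff.1 hphi]
  · have hpsum : ∀ j, _root_.psum (muE e') j = ∑ i, min j (xDeg e i) := fun j => by
      rw [psum_muE_of_isChainE he', phi_monomial_eq_iff.1 hphi]
    refine ⟨⟨?_, fun j => hpsum j ▸ psum_muE_le e j⟩, fun hμ => hne ?_⟩
    · rw [sum_muE, sum_muE, phi_monomial_eq_iff.1 hphi]
    · exact isChainE_of_psum_muE_eq (hμ ▸ hpsum)

/-- Every monomial of `ℂ[y_S]` has a unique multichain monomial with the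
same image under `φ`; moreover if the monomial is not itself a multichain monomial, the
partition strictly increases in dominance order. -/
theorem exists_unique_multichain_phi (n : ℕ) (hn : 1 ≤ n) (e : NES n →₀ ℕ) :
    (∃! y' : YRing n, (∃ e' : NES n →₀ ℕ, IsChainE e' ∧ y' = monomial e' 1) ∧
        phi n y' = phi n (monomial e 1)) ∧
    (¬ IsChainE e → ∀ e' : NES n →₀ ℕ, IsChainE e' →
        phi n (monomial e' 1) = phi n (monomial e 1) → domLT (muE e) (muE e')) :=
  exists_unique_multichain_phi_general n e

end
end

section
/- Let y be a multichain monomial of ℂ[y_S] whose partition μ(y) is semi-admissible or non-admissible for (𝓢_{n,k}, S_{n,k}) (resp. for (𝓡_{n,k}, R_{n,k})). Then y ∈ 𝓙_{n,k} (resp. y ∈ 𝓘_{n,k}), i.e. y = 0 in 𝓢_{n,k} (resp. in 𝓡_{n,k}). -/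
open scoped Classical
open MvPolynomial Finset

noncomputable section

/-- A partition `μ` (with parts at most `n`) is non-admissible for threshold `N`
(`N = kr` for the `S`-case, `N = kr+1` for the `R`-case) if it has at least `N` parts or
at least `r` parts equal to `n`. -/
def NonAdm (n r N : ℕ) (μ : Multiset ℕ) : Prop :=
  N ≤ Multiset.card μ ∨ r ≤ μ.count n

/-- A partition `μ` is semi-admissible for threshold `N` if it has fewer than `N` parts and
at most `r - 1` parts equal to `n`, but some value `n-k+1 ≤ i ≤ n-1` occurs at least
`r + 1` times. -/
def SemiAdm (n k r N : ℕ) (μ : Multiset ℕ) : Prop :=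
  Multiset.card μ < N ∧ μ.count n ≤ r - 1 ∧
    ∃ i : ℕ, n - k + 1 ≤ i ∧ i ≤ n - 1 ∧ r + 1 ≤ μ.count i

/-! A non-admissible partition either has too many parts, and then the monomial is divisible by
the product over a long multichain, or it contains `[n]` at least `r` times, and
`y_{[n]}^r = θ_n`. A semi-admissible one contains some `S` with `n - k + 1 ≤ |S|` at least
`r + 1` times, and `y_S^{r+1} ≡ y_S θ_{|S|}` modulo the Stanley–Reisner ideal, because distinct
sets of the same size are incomparable. -/

section

variable {n : ℕ}

lemma monomial_one_mem_of_le {I : Ideal (YRing n)} {f e : NES n →₀ ℕ} (hfe : f ≤ e)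
    (hf : (monomial f 1 : YRing n) ∈ I) : (monomial e 1 : YRing n) ∈ I :=
  I.mem_of_dvd (monomial_dvd_monomial.2 ⟨Or.inr hfe, one_dvd _⟩) hf

lemma monomial_one_mem_of_X_pow_mem {I : Ideal (YRing n)} {e : NES n →₀ ℕ} {S : NES n} {m : ℕ}
    (hm : m ≤ e S) (hS : (X S : YRing n) ^ m ∈ I) : (monomial e 1 : YRing n) ∈ I :=
  monomial_one_mem_of_le (Finsupp.single_le_iff.2 hm) (by rwa [← X_pow_eq_monomial])

lemma NES.eq_of_subset_of_card_eq {S T : NES n} (h : S.1 ⊆ T.1) (hc : S.1.card = T.1.card) :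
    S = T :=
  Subtype.ext (Finset.eq_of_subset_of_card_le h hc.ge)

lemma NES.card_le (S : NES n) : S.1.card ≤ n := by
  simpa using Finset.card_le_univ S.1

namespace IsChainE

variable {e : NES n →₀ ℕ}

lemma mono {f : NES n →₀ ℕ} (he : IsChainE e) (hfe : f ≤ e) : IsChainE f :=
  fun S hS T hT => he S (Finsupp.support_mono hfe hS) T (Finsupp.support_mono hfe hT)

lemma exists_subset_forall (he : IsChainE e) (he0 : e ≠ 0) :
    ∃ S₀ ∈ e.support, ∀ T ∈ e.support, S₀.1 ⊆ T.1 := by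
  obtain ⟨S₀, hS₀, hmin⟩ :=
    e.support.exists_min_image (fun S => S.1.card) (Finsupp.support_nonempty_iff.2 he0)
  refine ⟨S₀, hS₀, fun T hT => (he S₀ hS₀ T hT).elim id fun hTS => ?_⟩
  rw [NES.eq_of_subset_of_card_eq hTS (le_antisymm (Finset.card_le_card hTS) (hmin T hT))]

lemma count_muE_card {S : NES n} (he : IsChainE e) (hS : S ∈ e.support) :
    (muE e).count S.1.card = e S := by
  rw [muE, Finsupp.sum, Multiset.count_sum', Finset.sum_eq_single_of_mem S hS]
  · simp
  · intro T hT hTS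
    refine Multiset.count_eq_zero.2 fun hmem => hTS ?_
    have hc : T.1.card = S.1.card := (Multiset.eq_of_mem_replicate hmem).symm
    rcases he T hT S hS with h | h
    · exact NES.eq_of_subset_of_card_eq h hc
    · exact (NES.eq_of_subset_of_card_eq h hc.symm).symm

lemma exists_card_eq_le_apply {i m : ℕ} (he : IsChainE e) (hm : 0 < m)
    (h : m ≤ (muE e).count i) : ∃ S : NES n, S.1.card = i ∧ m ≤ e S := by
  obtain ⟨S, hS, hmem⟩ := Multiset.mem_sum.1 (Multiset.count_pos.1 (hm.trans_le h))
  have hi : i = S.1.card := Multiset.eq_of_mem_replicate hmem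
  subst hi
  exact ⟨S, rfl, (he.count_muE_card hS) ▸ h⟩

end IsChainE

lemma card_muE (e : NES n →₀ ℕ) : Multiset.card (muE e) = e.degree := by
  simp [muE, Finsupp.sum, Multiset.card_sum, Finsupp.degree_apply]

lemma multichain_cons {N : ℕ} {S₀ : NES n} {T : Fin N → NES n}
    (hT : ∀ i j, i ≤ j → (T i).1 ⊆ (T j).1) (h₀ : ∀ i, S₀.1 ⊆ (T i).1) :
    ∀ i j : Fin (N + 1), i ≤ j →
      ((Fin.cons S₀ T : Fin (N + 1) → NES n) i).1 ⊆
        ((Fin.cons S₀ T : Fin (N + 1) → NES n) j).1 := by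
  intro i j hij
  cases i using Fin.cases with
  | zero =>
    cases j using Fin.cases with
    | zero => exact subset_rfl
    | succ j => exact h₀ j
  | succ i =>
    cases j using Fin.cases with
    | zero => exact absurd hij (Fin.succ_pos i).not_ge
    | succ j => exact hT i j (Fin.succ_le_succ_iff.1 hij)

lemma IsChainE.exists_chain_le {e : NES n →₀ ℕ} (he : IsChainE e) {N : ℕ} (hN : N ≤ e.degree) :
    ∃ S : Fin N → NES n, (∀ i j, i ≤ j → (S i).1 ⊆ (S j).1) ∧
      ∑ i, Finsupp.single (S i) 1 ≤ e := by
  induction N generalizing e with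
  | zero => exact ⟨Fin.elim0, fun i => i.elim0, by simp⟩
  | succ N ih =>
    have he0 : e ≠ 0 := by rintro rfl; simp at hN
    obtain ⟨S₀, hS₀, hmin⟩ := he.exists_subset_forall he0
    have hS₀e : Finsupp.single S₀ 1 ≤ e :=
      Finsupp.single_le_iff.2 (Nat.one_le_iff_ne_zero.2 (Finsupp.mem_support_iff.1 hS₀))
    have hsplit : e - Finsupp.single S₀ 1 + Finsupp.single S₀ 1 = e := tsub_add_cancel_of_le hS₀e
    have hdeg : N ≤ (e - Finsupp.single S₀ 1).degree := by
      have := congrArg Finsupp.degree hsplit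
      rw [map_add, Finsupp.degree_single] at this
      omega
    obtain ⟨T, hT, hTle⟩ := ih (he.mono tsub_le_self) hdeg
    have hTe : ∀ i, T i ∈ e.support := fun i => by
      have : Finsupp.single (T i) 1 ≤ e :=
        ((Finset.single_le_sum (fun _ _ => zero_le) (Finset.mem_univ i)).trans hTle).trans
          tsub_le_self
      exact Finsupp.mem_support_iff.2 (Nat.one_le_iff_ne_zero.1 (Finsupp.single_le_iff.1 this))
    refine ⟨Fin.cons S₀ T, multichain_cons hT fun i => hmin _ (hTe i), ?_⟩
    rw [Fin.sum_univ_succ]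
    simp only [Fin.cons_zero, Fin.cons_succ]
    calc Finsupp.single S₀ 1 + ∑ i, Finsupp.single (T i) 1
        ≤ Finsupp.single S₀ 1 + (e - Finsupp.single S₀ 1) := add_le_add le_rfl hTle
      _ = e := by rw [add_comm, hsplit]

lemma monomial_one_mem_span_chainSet {e : NES n →₀ ℕ} (he : IsChainE e) {N : ℕ}
    (hN : N ≤ Multiset.card (muE e)) :
    (monomial e 1 : YRing n) ∈ Ideal.span (chainSet n N) := by
  obtain ⟨S, hS, hle⟩ := he.exists_chain_le (card_muE e ▸ hN)
  refine monomial_one_mem_of_le hle ?_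
  rw [monomial_sum_one]
  exact Ideal.subset_span ⟨S, hS, by simp only [X]⟩

lemma X_mul_theta_sub_pow_mem_SRideal {r : ℕ} (hr : 1 ≤ r) (S : NES n) :
    (X S * theta n r S.1.card - X S ^ (r + 1) : YRing n) ∈ SRideal n := by
  have hS : S ∈ univ.filter fun T : NES n => T.1.card = S.1.card := by simp
  rw [theta, ← Finset.add_sum_erase _ _ hS, mul_add, Finset.mul_sum, ← pow_succ',
    add_sub_cancel_left]
  refine Ideal.sum_mem _ fun T hT => ?_
  obtain ⟨hTS, hTc⟩ := Finset.mem_erase.1 hT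
  have hTc : T.1.card = S.1.card := (Finset.mem_filter.1 hTc).2
  have hincomp : X S * X T ∈ SRideal n := Ideal.subset_span
    ⟨S, T, fun h => hTS (NES.eq_of_subset_of_card_eq h hTc.symm).symm,
      fun h => hTS (NES.eq_of_subset_of_card_eq h hTc), rfl⟩
  rw [← Nat.sub_add_cancel hr, pow_succ', ← mul_assoc]
  exact Ideal.mul_mem_right _ _ hincomp

lemma theta_mem_STideal {k r i : ℕ} (h₁ : n - k + 1 ≤ i) (h₂ : i ≤ n) :
    theta n r i ∈ STideal n k r :=
  Ideal.subset_span (Or.inr ⟨i, h₁, h₂, rfl⟩)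

lemma X_pow_succ_mem_STideal {k r : ℕ} (hr : 1 ≤ r) {S : NES n} (hS : n - k + 1 ≤ S.1.card) :
    (X S : YRing n) ^ (r + 1) ∈ STideal n k r := by
  have hSR : SRideal n ≤ STideal n k r := Ideal.span_mono Set.subset_union_left
  have hθ := (STideal n k r).mul_mem_left (X S) (theta_mem_STideal hS S.card_le)
  simpa using (STideal n k r).sub_mem hθ (hSR (X_mul_theta_sub_pow_mem_SRideal hr S))

lemma X_pow_eq_theta_of_card_eq {r : ℕ} {S : NES n} (hS : S.1.card = n) :
    (X S : YRing n) ^ r = theta n r n := by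
  rw [theta, Finset.sum_eq_single_of_mem S (by simp [hS])]
  intro T hT hTS
  have hT : T.1.card = n := (Finset.mem_filter.1 hT).2
  exact absurd (Subtype.ext ((Finset.eq_univ_of_card T.1 (by simp [hT])).trans
    (Finset.eq_univ_of_card S.1 (by simp [hS])).symm)) hTS

lemma monomial_one_mem_of_semiAdm_or_nonAdm {k r N : ℕ} (hr : 1 ≤ r) {e : NES n →₀ ℕ}
    (he : IsChainE e) (hN : N ≤ k * r + 1)
    (h : SemiAdm n k r N (muE e) ∨ NonAdm n r N (muE e)) :
    (monomial e 1 : YRing n) ∈ Ideal.span (srSet n ∪ thetaSet n k r ∪ chainSet n N) := by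
  set J := Ideal.span (srSet n ∪ thetaSet n k r ∪ chainSet n N)
  have hST : STideal n k r ≤ J := Ideal.span_mono Set.subset_union_left
  have hchain : Ideal.span (chainSet n N) ≤ J := Ideal.span_mono Set.subset_union_right
  rcases h with ⟨-, -, i, hi₁, -, hi⟩ | hcard | hcount
  · obtain ⟨S, rfl, hS⟩ := he.exists_card_eq_le_apply (Nat.succ_pos r) hi
    exact hST (monomial_one_mem_of_X_pow_mem hS (X_pow_succ_mem_STideal hr hi₁))
  · exact hchain (monomial_one_mem_span_chainSet he hcard)
  · rcases Nat.eq_zero_or_pos k with rfl | hk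
    · -- `N ≤ 1 ≤ r ≤ count n μ ≤ #μ`
      exact hchain (monomial_one_mem_span_chainSet he
        (by have := Multiset.count_le_card n (muE e); omega))
    · obtain ⟨S, hS, hle⟩ := he.exists_card_eq_le_apply hr hcount
      refine hST (monomial_one_mem_of_X_pow_mem hle ?_)
      have hn : 0 < n := hS ▸ S.2.card_pos
      rw [X_pow_eq_theta_of_card_eq hS]
      exact theta_mem_STideal (by omega) le_rfl

end

theorem multichain_semi_or_non_admissible_mem_general (n k r : ℕ) (hr : 1 ≤ r)
    (e : NES n →₀ ℕ) (he : IsChainE e) :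
    ((SemiAdm n k r (k * r) (muE e) ∨ NonAdm n r (k * r) (muE e)) →
        (monomial e 1 : YRing n) ∈ Jideal n k r) ∧
    ((SemiAdm n k r (k * r + 1) (muE e) ∨ NonAdm n r (k * r + 1) (muE e)) →
        (monomial e 1 : YRing n) ∈ Iideal n k r) :=
  ⟨monomial_one_mem_of_semiAdm_or_nonAdm hr he (Nat.le_succ _),
    monomial_one_mem_of_semiAdm_or_nonAdm hr he le_rfl⟩

/-- A multichain monomial whose partition is semi-admissible or
non-admissible vanishes in the corresponding quotient: it lies in `𝓙_{n,k}`
(threshold `kr`), resp. in `𝓘_{n,k}` (threshold `kr + 1`). -/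
theorem multichain_semi_or_non_admissible_mem (n k r : ℕ) (hr : 1 ≤ r) (hn : 1 ≤ n)
    (hk : k ≤ n) (e : NES n →₀ ℕ) (he : IsChainE e) :
    ((SemiAdm n k r (k * r) (muE e) ∨ NonAdm n r (k * r) (muE e)) →
        (monomial e 1 : YRing n) ∈ Jideal n k r) ∧
    ((SemiAdm n k r (k * r + 1) (muE e) ∨ NonAdm n r (k * r + 1) (muE e)) →
        (monomial e 1 : YRing n) ∈ Iideal n k r) :=
  multichain_semi_or_non_admissible_mem_general n k r hr e he

end
end
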